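/- arXiv:1509.02132 — 3 statements merged into one kernel-verified Lean document; each statement's English description precedes it below -/
import Mathlib

section
/- Let V and E be finite types and let M : Matrix V E ℝ be the incidence matrix of a simple oriented hypergraph (all entries of M lie in {-1, 0, 1}). Then the Laplacian of the incidence dual satisfies D(Mᵀ) - A(Mᵀ) = Mᵀ * M, where Mᵀ is the incidence matrix of the incidence dual. -/
open Matrix

/-- The adjacency matrix of the (oriented hypergraph encoded by the) incidence
matrix `N`: `A(N) x x' = -∑ y, N x y * N x' y` for `x ≠ x'`, and `0` on the diagonal. -/
noncomputable def adjMat {X Y : Type*} [Fintype Y] [DecidableEq X]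
    (N : Matrix X Y ℝ) : Matrix X X ℝ :=
  fun x x' => if x = x' then 0 else -∑ y, N x y * N x' y

/-- The degree matrix: the diagonal matrix whose `(x,x)` entry is the number of
`y` with `N x y ≠ 0`. -/
noncomputable def degMat {X Y : Type*} [Fintype Y] [DecidableEq X]
    (N : Matrix X Y ℝ) : Matrix X X ℝ :=
  Matrix.diagonal fun x => ((Finset.univ.filter fun y => N x y ≠ 0).card : ℝ)

theorem dual_laplacian_eq_transpose_mul_incidence
    {V E : Type*} [Fintype V] [Fintype E] [DecidableEq E]
    (M : Matrix V E ℝ) (hM : ∀ i e, M i e ∈ ({-1, 0, 1} : Set ℝ)) :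
    degMat Mᵀ - adjMat Mᵀ = Mᵀ * M := by
  ext e e'
  simp only [Matrix.sub_apply, Matrix.mul_apply, degMat, adjMat, Matrix.diagonal,
    Matrix.transpose_apply, Matrix.of_apply]
  by_cases h : e = e'
  · subst h
    simp only [if_pos rfl, sub_zero]
    simp only [if_true]
    change ((Finset.univ.filter fun y => M y e ≠ 0).card : ℝ) - 0 = ∑ y, M y e * M y e
    rw [Finset.card_filter]
    push_cast
    rw [sub_zero]
    apply Finset.sum_congr rfl
    intro v _
    have h := hM v e
    simp only [Set.mem_insert_iff, Set.mem_singleton_iff] at h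
    rcases h with h | h | h <;> simp [h]
  · simp [h, Ne.symm h, mul_comm]
end

section
/- Let V and E be finite types, let k be a natural number, and let M : Matrix V E ℝ be the incidence matrix of a k-uniform linear simple oriented hypergraph (all entries of M lie in {-1, 0, 1}, every column of M has exactly k nonzero entries, and any two distinct columns of M have at most one common row at which both are nonzero). If λ : ℝ is an eigenvalue of the adjacency matrix A(Mᵀ) of the incidence dual (equivalently, of the intersection graph), i.e., there exists x : E → ℝ with x ≠ 0 and (A(Mᵀ)).mulVec x = λ • x, then λ ≤ k. -/
open Matrix

theorem dual_adjacency_eigenvalue_le_of_uniform_linear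
    {V E : Type*} [Fintype V] [Fintype E] [DecidableEq E] (k : ℕ)
    (M : Matrix V E ℝ) (hM : ∀ i e, M i e ∈ ({-1, 0, 1} : Set ℝ))
    (hunif : ∀ e, (Finset.univ.filter fun v => M v e ≠ 0).card = k)
    (hlin : ∀ e f : E, e ≠ f →
      (Finset.univ.filter fun v => M v e ≠ 0 ∧ M v f ≠ 0).card ≤ 1)
    (lam : ℝ) (x : E → ℝ) (hx : x ≠ 0) (heig : (adjMat Mᵀ).mulVec x = lam • x) :
    lam ≤ (k : ℝ) := by
  -- diagonal entries of MᵀM are k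
  have hdiag : ∀ e, ∑ v, M v e * M v e = (k : ℝ) := by
    intro e
    rw [← hunif e, Finset.card_filter]
    push_cast
    apply Finset.sum_congr rfl
    intro v _
    have h := hM v e
    simp only [Set.mem_insert_iff, Set.mem_singleton_iff] at h
    rcases h with h | h | h <;> simp [h]
  -- the eigenvector equation rewritten: MᵀM x = (k - lam) x
  have key : ∀ e, ∑ f, (∑ v, M v e * M v f) * x f = ((k : ℝ) - lam) * x e := by
    intro e
    have h1 := congrFun heig e
    simp only [mulVec, dotProduct, adjMat, Pi.smul_apply, smul_eq_mul,
      transpose_apply] at h1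
    have h2 : ∀ f, (if e = f then 0 else -∑ v, M v e * M v f) * x f
        = -((∑ v, M v e * M v f) * x f)
          + (if e = f then (∑ v, M v e * M v f) * x f else 0) := by
      intro f
      by_cases h : e = f <;> simp [h]
    rw [Finset.sum_congr rfl fun f _ => h2 f, Finset.sum_add_distrib,
      Finset.sum_ite_eq, if_pos (Finset.mem_univ e), Finset.sum_neg_distrib,
      hdiag e] at h1
    linarith [h1]
  have hpos : 0 < ∑ e, x e * x e := by
    obtain ⟨e0, he0⟩ : ∃ e, x e ≠ 0 := by
      by_contra h
      push_neg at h
      exact hx (funext h)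
    apply Finset.sum_pos' (fun e _ => mul_self_nonneg _)
    exact ⟨e0, Finset.mem_univ e0, mul_self_pos.mpr he0⟩
  have hquad : ((k : ℝ) - lam) * ∑ e, x e * x e
      = ∑ v, (∑ e, M v e * x e) * (∑ e, M v e * x e) := by
    calc ((k : ℝ) - lam) * ∑ e, x e * x e
        = ∑ e, x e * (((k : ℝ) - lam) * x e) := by
          rw [Finset.mul_sum]; apply Finset.sum_congr rfl; intro e _; ring
      _ = ∑ e, x e * ∑ f, (∑ v, M v e * M v f) * x f := by
          apply Finset.sum_congr rfl; intro e _; rw [key e]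
      _ = ∑ e, ∑ f, ∑ v, (M v e * x e) * (M v f * x f) := by
          apply Finset.sum_congr rfl; intro e _
          rw [Finset.mul_sum]
          apply Finset.sum_congr rfl; intro f _
          rw [Finset.sum_mul, Finset.mul_sum]
          apply Finset.sum_congr rfl; intro v _
          ring
      _ = ∑ v, ∑ e, ∑ f, (M v e * x e) * (M v f * x f) := by
          rw [show (∑ e, ∑ f, ∑ v, (M v e * x e) * (M v f * x f))
              = ∑ e, ∑ v : V, ∑ f, (M v e * x e) * (M v f * x f) from
            Finset.sum_congr rfl fun e _ => Finset.sum_comm ..]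
          exact Finset.sum_comm ..
      _ = ∑ v, (∑ e, M v e * x e) * (∑ f, M v f * x f) := by
          apply Finset.sum_congr rfl; intro v _
          rw [Finset.sum_mul]
          apply Finset.sum_congr rfl; intro e _
          rw [Finset.mul_sum]
  have hnn : 0 ≤ ((k : ℝ) - lam) * ∑ e, x e * x e := by
    rw [hquad]
    exact Finset.sum_nonneg fun v _ => mul_self_nonneg _
  nlinarith [hpos, hnn]
end

section
/- Let V and E be finite types and let M : Matrix V E ℝ be the incidence matrix of a simple oriented hypergraph (all entries of M lie in {-1, 0, 1}). Let ζ₁, ζ₂ : V → ℝ and ξ₁, ξ₂ : E → ℝ all take values in {-1, 1}. Then for every nonzero μ : ℝ, μ is an eigenvalue of (Matrix.diagonal ζ₁) * (M * Mᵀ) * (Matrix.diagonal ζ₁) if and only if μ is an eigenvalue of (Matrix.diagonal ξ₂) * (Mᵀ * M) * (Matrix.diagonal ξ₂). (That is, the Laplacian of any switched version G^{(ζ₁,ξ₁)} of G and the Laplacian of any switched version (G*)^{(ξ₂,ζ₂)} of the incidence dual G* have the same nonzero eigenvalues.) -/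
open Matrix

private lemma eig_conj {V : Type*} [Fintype V] [DecidableEq V]
    (d : V → ℝ) (hd : ∀ i, d i * d i = 1) (A : Matrix V V ℝ) (mu : ℝ) :
    (∃ x : V → ℝ, x ≠ 0 ∧ (Matrix.diagonal d * A * Matrix.diagonal d).mulVec x = mu • x) ↔
    (∃ x : V → ℝ, x ≠ 0 ∧ A.mulVec x = mu • x) := by
  have key : ∀ x : V → ℝ, (Matrix.diagonal d * A * Matrix.diagonal d).mulVec x
      = fun i => d i * (A.mulVec (fun j => d j * x j)) i := by
    intro x
    funext i
    rw [← Matrix.mulVec_mulVec, ← Matrix.mulVec_mulVec, Matrix.mulVec_diagonal]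
    congr 1
    congr 1
    funext j
    rw [Matrix.mulVec_diagonal]
  constructor
  · rintro ⟨x, hx, hEq⟩
    refine ⟨fun j => d j * x j, ?_, ?_⟩
    · intro h
      apply hx
      funext i
      have h1 : d i * x i = 0 := by simpa using congrFun h i
      have := congrArg (fun t => d i * t) h1
      simp only [mul_zero, ← mul_assoc, hd i, one_mul] at this
      simpa using this
    · funext i
      have h1 := congrFun hEq i
      rw [key] at h1
      simp only [Pi.smul_apply, smul_eq_mul] at h1 ⊢
      have h2 := congrArg (fun t => d i * t) h1
      simp only [← mul_assoc, hd i, one_mul] at h2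
      rw [h2]; ring
  · rintro ⟨x, hx, hEq⟩
    refine ⟨fun j => d j * x j, ?_, ?_⟩
    · intro h
      apply hx
      funext i
      have h1 : d i * x i = 0 := by simpa using congrFun h i
      rcases mul_eq_zero.mp h1 with h' | h'
      · have := hd i; rw [h'] at this; simp at this
      · simpa using h'
    · rw [key]
      funext i
      have hdx : (fun j => d j * (d j * x j)) = x := by
        funext j; rw [← mul_assoc, hd j, one_mul]
      simp only [hdx, hEq, Pi.smul_apply, smul_eq_mul]
      ring

private lemma eig_swap {V E : Type*} [Fintype V] [Fintype E]
    (A : Matrix V E ℝ) (mu : ℝ) (hmu : mu ≠ 0) (x : V → ℝ) (hx : x ≠ 0)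
    (h : (A * Aᵀ).mulVec x = mu • x) :
    ∃ y : E → ℝ, y ≠ 0 ∧ (Aᵀ * A).mulVec y = mu • y := by
  refine ⟨Aᵀ.mulVec x, ?_, ?_⟩
  · intro hy
    apply hx
    have h2 : A.mulVec (Aᵀ.mulVec x) = mu • x := by
      rw [Matrix.mulVec_mulVec]; exact h
    rw [hy, Matrix.mulVec_zero] at h2
    have h3 := h2.symm
    rcases smul_eq_zero.mp h3 with h' | h'
    · exact absurd h' hmu
    · exact h'
  · rw [← Matrix.mulVec_mulVec, Matrix.mulVec_mulVec x A Aᵀ, h, Matrix.mulVec_smul]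

theorem switched_laplacian_dual_same_nonzero_eigenvalues
    {V E : Type*} [Fintype V] [Fintype E] [DecidableEq V] [DecidableEq E]
    (M : Matrix V E ℝ) (hM : ∀ i e, M i e ∈ ({-1, 0, 1} : Set ℝ))
    (ζ₁ ζ₂ : V → ℝ) (ξ₁ ξ₂ : E → ℝ)
    (hζ₁ : ∀ i, ζ₁ i = -1 ∨ ζ₁ i = 1) (hζ₂ : ∀ i, ζ₂ i = -1 ∨ ζ₂ i = 1)
    (hξ₁ : ∀ e, ξ₁ e = -1 ∨ ξ₁ e = 1) (hξ₂ : ∀ e, ξ₂ e = -1 ∨ ξ₂ e = 1)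
    (mu : ℝ) (hmu : mu ≠ 0) :
    (∃ x : V → ℝ, x ≠ 0 ∧
      (Matrix.diagonal ζ₁ * (M * Mᵀ) * Matrix.diagonal ζ₁).mulVec x = mu • x) ↔
    (∃ y : E → ℝ, y ≠ 0 ∧
      (Matrix.diagonal ξ₂ * (Mᵀ * M) * Matrix.diagonal ξ₂).mulVec y = mu • y) := by
  have hd1 : ∀ i, ζ₁ i * ζ₁ i = 1 := fun i => by rcases hζ₁ i with h | h <;> rw [h] <;> ring
  have hd2 : ∀ e, ξ₂ e * ξ₂ e = 1 := fun e => by rcases hξ₂ e with h | h <;> rw [h] <;> ring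
  rw [eig_conj ζ₁ hd1, eig_conj ξ₂ hd2]
  constructor
  · rintro ⟨x, hx, hEq⟩
    exact eig_swap M mu hmu x hx hEq
  · rintro ⟨y, hy, hEq⟩
    have := eig_swap Mᵀ mu hmu y hy (by rwa [Matrix.transpose_transpose])
    simpa using this
end
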